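/- arXiv:2109.06403 — 4 statements merged into one kernel-verified Lean document; each statement's English description precedes it below -/
import Mathlib

section
/- Let 𝔽 be a field, n a positive integer, and ℬ ≤ M(n,𝔽) a matrix space (a linear subspace of n×n matrices). Then the function sd_ℬ is supermodular: for any two subspaces U₁, U₂ of 𝔽ⁿ, sd_ℬ(U₁ ∩ U₂) + sd_ℬ(U₁ + U₂) ≥ sd_ℬ(U₁) + sd_ℬ(U₂). -/
/-- The image `ℬ(U)` of a subspace `U ≤ 𝔽ⁿ` under a matrix space `ℬ ≤ M(n,𝔽)`:
the linear span of `{B *ᵥ u : B ∈ ℬ, u ∈ U}`. -/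
def matImage {𝔽 : Type*} [Field 𝔽] {n : ℕ} (ℬ : Submodule 𝔽 (Matrix (Fin n) (Fin n) 𝔽))
    (U : Submodule 𝔽 (Fin n → 𝔽)) : Submodule 𝔽 (Fin n → 𝔽) :=
  Submodule.span 𝔽 {v | ∃ B ∈ ℬ, ∃ u ∈ U, v = B.mulVec u}

/-- `sd_ℬ(U) = dim U − dim ℬ(U)`. -/
noncomputable def sd {𝔽 : Type*} [Field 𝔽] {n : ℕ} (ℬ : Submodule 𝔽 (Matrix (Fin n) (Fin n) 𝔽))
    (U : Submodule 𝔽 (Fin n → 𝔽)) : ℤ :=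
  (Module.finrank 𝔽 U : ℤ) - (Module.finrank 𝔽 (matImage ℬ U) : ℤ)

lemma matImage_mono {𝔽 : Type*} [Field 𝔽] {n : ℕ} (ℬ : Submodule 𝔽 (Matrix (Fin n) (Fin n) 𝔽))
    {U V : Submodule 𝔽 (Fin n → 𝔽)} (h : U ≤ V) : matImage ℬ U ≤ matImage ℬ V := by
  apply Submodule.span_mono
  rintro v ⟨B, hB, u, hu, rfl⟩
  exact ⟨B, hB, u, h hu, rfl⟩

lemma matImage_sup {𝔽 : Type*} [Field 𝔽] {n : ℕ} (ℬ : Submodule 𝔽 (Matrix (Fin n) (Fin n) 𝔽))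
    (U₁ U₂ : Submodule 𝔽 (Fin n → 𝔽)) :
    matImage ℬ (U₁ ⊔ U₂) = matImage ℬ U₁ ⊔ matImage ℬ U₂ := by
  apply le_antisymm
  · rw [matImage, Submodule.span_le]
    rintro v ⟨B, hB, u, hu, rfl⟩
    obtain ⟨u₁, hu₁, u₂, hu₂, rfl⟩ := Submodule.mem_sup.mp hu
    rw [Matrix.mulVec_add]
    exact Submodule.add_mem_sup
      (Submodule.subset_span ⟨B, hB, u₁, hu₁, rfl⟩)
      (Submodule.subset_span ⟨B, hB, u₂, hu₂, rfl⟩)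
  · exact sup_le (matImage_mono ℬ le_sup_left) (matImage_mono ℬ le_sup_right)

/-- `sd_ℬ` is supermodular. -/
theorem sd_supermodular {𝔽 : Type*} [Field 𝔽] {n : ℕ} (hn : 0 < n)
    (ℬ : Submodule 𝔽 (Matrix (Fin n) (Fin n) 𝔽)) (U₁ U₂ : Submodule 𝔽 (Fin n → 𝔽)) :
    sd ℬ U₁ + sd ℬ U₂ ≤ sd ℬ (U₁ ⊓ U₂) + sd ℬ (U₁ ⊔ U₂) := by
  have hU : Module.finrank 𝔽 ↥(U₁ ⊔ U₂) + Module.finrank 𝔽 ↥(U₁ ⊓ U₂)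
      = Module.finrank 𝔽 U₁ + Module.finrank 𝔽 U₂ :=
    Submodule.finrank_sup_add_finrank_inf_eq U₁ U₂
  have hI : Module.finrank 𝔽 ↥(matImage ℬ U₁ ⊔ matImage ℬ U₂)
        + Module.finrank 𝔽 ↥(matImage ℬ U₁ ⊓ matImage ℬ U₂)
      = Module.finrank 𝔽 ↥(matImage ℬ U₁) + Module.finrank 𝔽 ↥(matImage ℬ U₂) :=
    Submodule.finrank_sup_add_finrank_inf_eq _ _
  have hle : Module.finrank 𝔽 ↥(matImage ℬ (U₁ ⊓ U₂))
      ≤ Module.finrank 𝔽 ↥(matImage ℬ U₁ ⊓ matImage ℬ U₂) :=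
    Submodule.finrank_mono (le_inf (matImage_mono ℬ inf_le_left) (matImage_mono ℬ inf_le_right))
  simp only [sd]
  rw [matImage_sup]
  push_cast
  omega
end

section
/- Let ψ : 𝔤 → V be a linear kernel vector for the representation (ρ, V) of a Lie algebra 𝔤 over a field 𝔽. Then for all x, y ∈ 𝔤: ρ(x)(ψ([x,y]) − ρ(x)ψ(y)) = 0 and ρ(y)(ψ([x,y]) − ρ(x)ψ(y)) = 0. Consequently, the vector ψ([x,y]) − ρ(x)ψ(y) is annihilated by ρ(z) for every element z of the Lie subalgebra of 𝔤 generated by x and y. -/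
attribute [local instance] LieRing.ofAssociativeRing

/-!
Polarizing `ρ(x)ψ(x) = 0` gives the antisymmetry `ρ(a)ψ(b) = -ρ(b)ψ(a)`. Together with
`ρ[x,y] = ρ(x)ρ(y) - ρ(y)ρ(x)` it turns `ρ(x)ψ([x,y])` into `ρ(x)ρ(x)ψ(y)` and `ρ(y)ψ([x,y])`
into `ρ(y)ρ(x)ψ(y)`. The elements of `𝔤` annihilating a fixed vector form a Lie subalgebra, so the
statement for `x` and `y` extends to the Lie subalgebra they generate.
-/

namespace LieHom

variable {R L M : Type*} [CommRing R] [LieRing L] [LieAlgebra R L] [AddCommGroup M] [Module R M]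
  (ρ : L →ₗ⁅R⁆ Module.End R M)

lemma map_lie_apply (a b : L) (v : M) : ρ ⁅a, b⁆ v = ρ a (ρ b v) - ρ b (ρ a v) := by
  rw [LieHom.map_lie, LieRing.of_associative_ring_bracket]
  rfl

def annihilator (v : M) : LieSubalgebra R L where
  carrier := {z | ρ z v = 0}
  add_mem' {a b} (ha : ρ a v = 0) (hb : ρ b v = 0) :=
    show ρ (a + b) v = 0 by rw [map_add, LinearMap.add_apply, ha, hb, add_zero]
  zero_mem' := show ρ 0 v = 0 by rw [map_zero, LinearMap.zero_apply]
  smul_mem' c a (ha : ρ a v = 0) :=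
    show ρ (c • a) v = 0 by rw [map_smul, LinearMap.smul_apply, ha, smul_zero]
  lie_mem' {a b} (ha : ρ a v = 0) (hb : ρ b v = 0) :=
    show ρ ⁅a, b⁆ v = 0 by rw [map_lie_apply, ha, hb, map_zero, map_zero, sub_zero]

variable {ρ} {ψ : L →ₗ[R] M} (hψ : ∀ x, ρ x (ψ x) = 0)
include hψ

lemma apply_eq_neg_apply_of_forall_apply_self (a b : L) : ρ a (ψ b) = -ρ b (ψ a) := by
  have h := hψ (a + b)
  rw [map_add, map_add, LinearMap.add_apply, map_add, map_add, hψ a, hψ b, zero_add,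
    add_zero] at h
  exact eq_neg_of_add_eq_zero_left h

lemma apply_lie_sub_left_of_forall_apply_self (x y : L) :
    ρ x (ψ ⁅x, y⁆ - ρ x (ψ y)) = 0 := by
  have key : ρ x (ψ ⁅x, y⁆) = ρ x (ρ x (ψ y)) := calc
    ρ x (ψ ⁅x, y⁆) = -ρ ⁅x, y⁆ (ψ x) := apply_eq_neg_apply_of_forall_apply_self hψ x _
    _ = ρ y (ρ x (ψ x)) - ρ x (ρ y (ψ x)) := by rw [map_lie_apply, neg_sub]
    _ = ρ x (ρ x (ψ y)) := by
      rw [hψ x, map_zero, zero_sub, apply_eq_neg_apply_of_forall_apply_self hψ y x, map_neg, neg_neg]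
  rw [map_sub, key, sub_self]

lemma apply_lie_sub_right_of_forall_apply_self (x y : L) :
    ρ y (ψ ⁅x, y⁆ - ρ x (ψ y)) = 0 := by
  have key : ρ y (ψ ⁅x, y⁆) = ρ y (ρ x (ψ y)) := calc
    ρ y (ψ ⁅x, y⁆) = -ρ ⁅x, y⁆ (ψ y) := apply_eq_neg_apply_of_forall_apply_self hψ y _
    _ = ρ y (ρ x (ψ y)) - ρ x (ρ y (ψ y)) := by rw [map_lie_apply, neg_sub]
    _ = ρ y (ρ x (ψ y)) := by rw [hψ y, map_zero, sub_zero]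
  rw [map_sub, key, sub_self]

end LieHom

open LieHom in
/-- If `ψ` is a linear kernel vector for a representation `(ρ, V)` of a Lie algebra `𝔤`
(i.e. `ρ(x)ψ(x) = 0` for all `x`), then `ψ([x,y]) − ρ(x)ψ(y)` is annihilated by `ρ(x)`,
by `ρ(y)`, and by `ρ(z)` for every `z` in the Lie subalgebra generated by `x` and `y`. -/
theorem linearKernelVector_key {𝔽 : Type*} [Field 𝔽] {𝔤 V : Type*}
    [LieRing 𝔤] [LieAlgebra 𝔽 𝔤] [AddCommGroup V] [Module 𝔽 V]
    (ρ : 𝔤 →ₗ⁅𝔽⁆ Module.End 𝔽 V) (ψ : 𝔤 →ₗ[𝔽] V) (hψ : ∀ x : 𝔤, ρ x (ψ x) = 0)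
    (x y : 𝔤) :
    ρ x (ψ ⁅x, y⁆ - ρ x (ψ y)) = 0 ∧
    ρ y (ψ ⁅x, y⁆ - ρ x (ψ y)) = 0 ∧
    ∀ z ∈ LieSubalgebra.lieSpan 𝔽 𝔤 {x, y}, ρ z (ψ ⁅x, y⁆ - ρ x (ψ y)) = 0 := by
  have hx := apply_lie_sub_left_of_forall_apply_self hψ x y
  have hy := apply_lie_sub_right_of_forall_apply_self hψ x y
  have hspan : LieSubalgebra.lieSpan 𝔽 𝔤 {x, y} ≤ ρ.annihilator (ψ ⁅x, y⁆ - ρ x (ψ y)) :=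
    LieSubalgebra.lieSpan_le.mpr (Set.insert_subset hx (Set.singleton_subset_iff.mpr hy))
  exact ⟨hx, hy, fun z hz => hspan hz⟩
end

section
/- Let 𝔤 be an m-dimensional Lie algebra over an infinite field 𝔽 such that there exist two elements x₀, y₀ ∈ 𝔤 that generate 𝔤 as a Lie algebra. Then there are elements xᵢ, yᵢ ∈ 𝔤 for i = 1, …, m² such that for every i, the pair xᵢ and yᵢ generates 𝔤 as a Lie algebra, and the elements xᵢ ⊗ yᵢ span the tensor product 𝔤 ⊗ 𝔤. -/
open TensorProduct

/-!
If bracket words `w₁, …, wₘ` in two letters evaluate at `(x₀, y₀)` to a basis of `𝔤`, then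
`(u, v)` generates `𝔤` as soon as `det (wᵢ(u, v)) ≠ 0`, and this determinant is a nonzero
polynomial `D` in the coordinates of `(u, v)`. A linear form `φ` on `𝔤 ⊗ 𝔤` vanishing on all
`u ⊗ v` with `(u, v)` generating gives a bilinear polynomial `φ(u ⊗ v)` vanishing wherever `D`
does not; over an infinite field it is therefore zero, so `φ = 0`. Hence these tensors span
`𝔤 ⊗ 𝔤`, and `m²` of them form a basis.
-/

theorem MvPolynomial.eq_zero_of_eval_eq_zero_of_eval_ne_zero {σ R : Type*} [CommRing R]
    [IsDomain R] [Infinite R] {p q : MvPolynomial σ R} (hq : q ≠ 0)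
    (h : ∀ x, eval x q ≠ 0 → eval x p = 0) : p = 0 := by
  have hpq : p * q = 0 := funext fun x => by
    by_cases hx : eval x q = 0 <;> simp [hx, h]
  exact (mul_eq_zero.mp hpq).resolve_right hq

theorem Module.Basis.exists_basis_eq_comp_of_span_range_eq_top {K V ι ι' : Type*}
    [DivisionRing K] [AddCommGroup V] [Module K V] (b : Module.Basis ι' K V) {f : ι → V}
    (hf : Submodule.span K (Set.range f) = ⊤) :
    ∃ (a : ι' → ι) (c : Module.Basis ι' K V), ⇑c = f ∘ a := by
  obtain ⟨κ, a, -, hspan, hli⟩ := exists_linearIndependent' K f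
  let c := Module.Basis.mk hli (by rw [hspan, hf])
  refine ⟨a ∘ b.indexEquiv c, c.reindex (b.indexEquiv c).symm, ?_⟩
  ext i
  simp [c]

namespace Module.Basis

variable {R M ι : Type*} [CommRing R] [AddCommGroup M] [Module R M]

noncomputable def pairCoords (b : Module.Basis ι R M) (u v : M) : ι ⊕ ι → R :=
  Sum.elim (b.repr u) (b.repr v)

variable [Fintype ι]

theorem pairCoords_surjective (b : Module.Basis ι R M) (c : ι ⊕ ι → R) :
    ∃ u v, b.pairCoords u v = c :=
  ⟨b.equivFun.symm (c ∘ .inl), b.equivFun.symm (c ∘ .inr), by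
    ext (i | i) <;>
      simp only [pairCoords, Sum.elim_inl, Sum.elim_inr, ← b.equivFun_apply,
        LinearEquiv.apply_symm_apply] <;> rfl⟩

theorem bilin_apply_eq_sum {N : Type*} [AddCommGroup N] [Module R N] (b : Module.Basis ι R M)
    (B : M →ₗ[R] M →ₗ[R] N) (u v : M) :
    B u v = ∑ p, ∑ q, (b.repr u p * b.repr v q) • B (b p) (b q) := by
  rw [← LinearMap.sum_repr_mul_repr_mul b b (B := B) u v]
  simp [Finsupp.sum_fintype, mul_smul]

noncomputable def bilinPoly (b : Module.Basis ι R M) (B : M →ₗ[R] M →ₗ[R] R) :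
    MvPolynomial (ι ⊕ ι) R :=
  ∑ p, ∑ q, MvPolynomial.C (B (b p) (b q)) * MvPolynomial.X (.inl p) * MvPolynomial.X (.inr q)

theorem eval_bilinPoly (b : Module.Basis ι R M) (B : M →ₗ[R] M →ₗ[R] R) (u v : M) :
    MvPolynomial.eval (b.pairCoords u v) (b.bilinPoly B) = B u v := by
  rw [b.bilin_apply_eq_sum B]
  simp only [bilinPoly, pairCoords, map_sum, map_mul, MvPolynomial.eval_C, MvPolynomial.eval_X,
    Sum.elim_inl, Sum.elim_inr, smul_eq_mul]
  exact Finset.sum_congr rfl fun _ _ => Finset.sum_congr rfl fun _ _ => by ring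

theorem repr_lie_apply {L : Type*} [LieRing L] [LieAlgebra R L] (b : Module.Basis ι R L)
    (u v : L) (j : ι) :
    b.repr ⁅u, v⁆ j = ∑ p, ∑ q, b.repr ⁅b p, b q⁆ j * b.repr u p * b.repr v q := by
  have h := b.bilin_apply_eq_sum (LieModule.toEnd R L L : L →ₗ[R] Module.End R L) u v
  simp only [LieHom.coe_toLinearMap, LieModule.toEnd_apply_apply] at h
  simp only [h, map_sum, map_smul, Finsupp.coe_finsetSum, Finset.sum_apply, Finsupp.smul_apply,
    smul_eq_mul]
  exact Finset.sum_congr rfl fun _ _ => Finset.sum_congr rfl fun _ _ => by ring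

end Module.Basis

theorem span_tmul_eq_top_of_eval_ne_zero {K M ι : Type*} [Field K] [Infinite K]
    [AddCommGroup M] [Module K M] [Fintype ι] (b : Module.Basis ι K M) {P : Set (M × M)}
    {D : MvPolynomial (ι ⊕ ι) K} (hD : D ≠ 0)
    (hP : ∀ u v, MvPolynomial.eval (b.pairCoords u v) D ≠ 0 → (u, v) ∈ P) :
    Submodule.span K (Set.range fun p : P => p.1.1 ⊗ₜ[K] p.1.2) = ⊤ := by
  rw [← Submodule.dualAnnihilator_eq_bot_iff, eq_bot_iff]
  intro φ hφ
  rw [Submodule.mem_dualAnnihilator] at hφ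
  let B := (TensorProduct.mk K M M).compr₂ φ
  have hB : b.bilinPoly B = 0 := by
    refine MvPolynomial.eq_zero_of_eval_eq_zero_of_eval_ne_zero hD fun c hc => ?_
    obtain ⟨u, v, rfl⟩ := b.pairCoords_surjective c
    rw [b.eval_bilinPoly]
    exact hφ _ (Submodule.subset_span ⟨⟨(u, v), hP u v hc⟩, rfl⟩)
  refine (Submodule.mem_bot K).mpr (TensorProduct.ext' fun u v => ?_)
  simpa [hB, B] using (b.eval_bilinPoly B u v).symm

inductive LieWord
  | fst
  | snd
  | bracket (a b : LieWord)

namespace LieWord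

section Eval

variable {R L : Type*} [CommRing R] [LieRing L] [LieAlgebra R L]

def eval (u v : L) : LieWord → L
  | fst => u
  | snd => v
  | bracket a b => ⁅a.eval u v, b.eval u v⁆

theorem eval_mem_lieSpan (u v : L) (w : LieWord) :
    w.eval u v ∈ LieSubalgebra.lieSpan R L {u, v} := by
  induction w with
  | fst => exact LieSubalgebra.subset_lieSpan (Set.mem_insert u _)
  | snd => exact LieSubalgebra.subset_lieSpan (Set.mem_insert_of_mem u rfl)
  | bracket a b ha hb => exact LieSubalgebra.lie_mem _ ha hb

open Submodule in
variable (R) in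
theorem toSubmodule_lieSpan_pair (u v : L) :
    (LieSubalgebra.lieSpan R L {u, v}).toSubmodule = span R (Set.range (eval u v)) := by
  suffices ∀ {x y}, x ∈ span R (Set.range (eval u v)) → y ∈ span R (Set.range (eval u v)) →
      ⁅x, y⁆ ∈ span R (Set.range (eval u v)) by
    refine le_antisymm ?_ (span_le.mpr (Set.range_subset_iff.mpr (eval_mem_lieSpan u v)))
    change _ ≤ ({ span R (Set.range (eval u v)) with lie_mem' := this } : LieSubalgebra R L)
    refine LieSubalgebra.lieSpan_le.mpr (Set.insert_subset ?_ (Set.singleton_subset_iff.mpr ?_))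
    · exact subset_span ⟨fst, rfl⟩
    · exact subset_span ⟨snd, rfl⟩
  intro x y hx hy
  induction hx, hy using span_induction₂ with
  | mem_mem x y hx hy =>
    obtain ⟨a, rfl⟩ := hx
    obtain ⟨b, rfl⟩ := hy
    exact subset_span ⟨bracket a b, rfl⟩
  | zero_left | zero_right => simp
  | add_left _ _ _ _ _ _ hx hy | add_right _ _ _ _ _ _ hx hy => simp [add_mem hx hy]
  | smul_left r _ _ _ _ h | smul_right r _ _ _ _ h => simp [smul_mem _ r h]

end Eval

section Coordinates

variable {R L ι : Type*} [CommRing R] [LieRing L] [LieAlgebra R L] [Fintype ι]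

noncomputable def coordPoly (b : Module.Basis ι R L) : LieWord → ι → MvPolynomial (ι ⊕ ι) R
  | fst, j => MvPolynomial.X (.inl j)
  | snd, j => MvPolynomial.X (.inr j)
  | bracket a d, j =>
    ∑ p, ∑ q, MvPolynomial.C (b.repr ⁅b p, b q⁆ j) * a.coordPoly b p * d.coordPoly b q

theorem eval_coordPoly (b : Module.Basis ι R L) (u v : L) (w : LieWord) (j : ι) :
    MvPolynomial.eval (b.pairCoords u v) (w.coordPoly b j) = b.repr (w.eval u v) j := by
  induction w generalizing j with
  | fst => simp only [coordPoly, eval, MvPolynomial.eval_X, Module.Basis.pairCoords, Sum.elim_inl]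
  | snd => simp only [coordPoly, eval, MvPolynomial.eval_X, Module.Basis.pairCoords, Sum.elim_inr]
  | bracket a d ha hd =>
    rw [eval, b.repr_lie_apply]
    simp only [coordPoly, map_sum, map_mul, MvPolynomial.eval_C, ha, hd]

variable [DecidableEq ι]

noncomputable def detPoly (b : Module.Basis ι R L) (w : ι → LieWord) : MvPolynomial (ι ⊕ ι) R :=
  (Matrix.of fun i j => (w i).coordPoly b j).det

theorem eval_detPoly (b : Module.Basis ι R L) (w : ι → LieWord) (u v : L) :
    MvPolynomial.eval (b.pairCoords u v) (detPoly b w) = b.det fun i => (w i).eval u v := by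
  rw [detPoly, RingHom.map_det, Module.Basis.det_apply, ← Matrix.det_transpose]
  congr 1
  ext i j
  simp only [RingHom.mapMatrix_apply, Matrix.transpose_apply, Matrix.map_apply, Matrix.of_apply,
    Module.Basis.toMatrix_apply]
  exact eval_coordPoly b u v (w j) i

end Coordinates

section Generation

variable {K L ι : Type*} [Field K] [LieRing L] [LieAlgebra K L] [Fintype ι] [DecidableEq ι]

theorem exists_detPoly_ne_zero (b : Module.Basis ι K L) {x₀ y₀ : L}
    (h : LieSubalgebra.lieSpan K L {x₀, y₀} = ⊤) : ∃ w : ι → LieWord, detPoly b w ≠ 0 := by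
  have hspan : Submodule.span K (Set.range (eval x₀ y₀)) = ⊤ := by
    rw [← toSubmodule_lieSpan_pair, h, LieSubalgebra.top_toSubmodule]
  obtain ⟨w, c, hc⟩ := b.exists_basis_eq_comp_of_span_range_eq_top hspan
  refine ⟨w, fun h0 => (b.isUnit_det c).ne_zero ?_⟩
  rw [hc, ← map_zero (MvPolynomial.eval (b.pairCoords x₀ y₀)), ← h0, eval_detPoly]
  rfl

theorem lieSpan_eq_top_of_eval_detPoly_ne_zero (b : Module.Basis ι K L) (w : ι → LieWord)
    {u v : L} (h : MvPolynomial.eval (b.pairCoords u v) (detPoly b w) ≠ 0) :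
    LieSubalgebra.lieSpan K L {u, v} = ⊤ := by
  rw [eval_detPoly] at h
  obtain ⟨-, hspan⟩ := b.is_basis_iff_det.mpr (isUnit_iff_ne_zero.mpr h)
  rw [← LieSubalgebra.toSubmodule_eq_top, toSubmodule_lieSpan_pair, eq_top_iff, ← hspan]
  exact Submodule.span_mono (Set.range_comp_subset_range w (eval u v))

end Generation

end LieWord

/-- In an `m`-dimensional Lie algebra over an infinite field which is generated by two elements,
there are `m²` generating pairs `(xᵢ, yᵢ)` such that the `xᵢ ⊗ yᵢ` span `𝔤 ⊗ 𝔤`. -/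
theorem generating_pairs_span_tensor {𝔽 : Type*} [Field 𝔽] [Infinite 𝔽]
    {𝔤 : Type*} [LieRing 𝔤] [LieAlgebra 𝔽 𝔤] [Module.Finite 𝔽 𝔤]
    (x₀ y₀ : 𝔤) (hgen : LieSubalgebra.lieSpan 𝔽 𝔤 {x₀, y₀} = ⊤) :
    ∃ x y : Fin ((Module.finrank 𝔽 𝔤) ^ 2) → 𝔤,
      (∀ i, LieSubalgebra.lieSpan 𝔽 𝔤 {x i, y i} = ⊤) ∧
      Submodule.span 𝔽 (Set.range fun i => x i ⊗ₜ[𝔽] y i) =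
        (⊤ : Submodule 𝔽 (𝔤 ⊗[𝔽] 𝔤)) := by
  let b := Module.finBasis 𝔽 𝔤
  obtain ⟨w, hw⟩ := LieWord.exists_detPoly_ne_zero b hgen
  have hspan := span_tmul_eq_top_of_eval_ne_zero b
    (P := {p | LieSubalgebra.lieSpan 𝔽 𝔤 {p.1, p.2} = ⊤}) hw
    fun _ _ => LieWord.lieSpan_eq_top_of_eval_detPoly_ne_zero b w
  have hrank : Module.finrank 𝔽 (𝔤 ⊗[𝔽] 𝔤) = Module.finrank 𝔽 𝔤 ^ 2 := by
    rw [Module.finrank_tensorProduct, sq]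
  obtain ⟨a, c, hc⟩ :=
    (Module.finBasisOfFinrankEq 𝔽 _ hrank).exists_basis_eq_comp_of_span_range_eq_top hspan
  refine ⟨fun i => (a i).1.1, fun i => (a i).1.2, fun i => (a i).2, ?_⟩
  rw [← c.span_eq, hc]
  rfl
end

section
/- Let 𝔤 be a finite-dimensional Lie algebra over an infinite field 𝔽 that can be generated by two elements, let (ρ, V) be a representation of 𝔤 such that the trivial representation is not a subrepresentation of (ρ, V) (i.e., there is no nonzero v ∈ V with ρ(x)v = 0 for all x ∈ 𝔤), and let ψ : 𝔤 → V be a linear kernel vector. Then for every x, y ∈ 𝔤: ψ([x,y]) − ρ(x)ψ(y) = 0. -/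
attribute [local instance] LieRing.ofAssociativeRing

/-
Put `C(x, y) = ψ⁅x, y⁆ - ρ(x) ψ(y)`. Polarizing `ρ(x) ψ(x) = 0` gives `ρ(x) ψ(y) = -ρ(y) ψ(x)`,
whence `ρ(x) C(x, y) = ρ(y) C(x, y) = 0`. The elements of `𝔤` killing a vector form a Lie
subalgebra, so `C(x, y)` is killed by all of `𝔤`, hence vanishes, whenever `x, y` generate `𝔤`.
Generating pairs are Zariski-dense: along the line `s ↦ (x + s a, y + s b)` through a generating
pair, iterated brackets of the two entries are polynomial in `s`, so some determinant of them is a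
polynomial in `s` that is nonzero at the generating pair, and the entries generate `𝔤` off its
finitely many roots. Since `C` is bilinear, `s ↦ C(x + s a, y + s b)` is polynomial as well; it
vanishes at infinitely many `s`, hence everywhere, in particular at `s = 0`.
-/

open Polynomial

section PolynomialCurves

variable (R M : Type*) [CommRing R] [AddCommGroup M] [Module R M]

def polynomialCurves : Submodule R (R → M) :=
  Submodule.span R (Set.range fun p : ℕ × M => fun s : R => s ^ p.1 • p.2)

variable {R M}

theorem pow_smul_mem_polynomialCurves (k : ℕ) (c : M) :
    (fun s : R => s ^ k • c) ∈ polynomialCurves R M :=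
  Submodule.subset_span ⟨(k, c), rfl⟩

theorem add_smul_mem_polynomialCurves (x a : M) :
    (fun s : R => x + s • a) ∈ polynomialCurves R M := by
  convert add_mem (pow_smul_mem_polynomialCurves 0 x) (pow_smul_mem_polynomialCurves 1 a) using 1
  funext s
  simp

theorem apply₂_mem_polynomialCurves {N P : Type*} [AddCommGroup N] [Module R N]
    [AddCommGroup P] [Module R P] (B : M →ₗ[R] N →ₗ[R] P) {γ : R → M} {δ : R → N}
    (hγ : γ ∈ polynomialCurves R M) (hδ : δ ∈ polynomialCurves R N) :
    (fun s => B (γ s) (δ s)) ∈ polynomialCurves R P := by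
  let B' : (R → M) →ₗ[R] (R → N) →ₗ[R] R → P :=
    LinearMap.mk₂ R (fun γ δ s => B (γ s) (δ s)) (fun _ _ _ => by ext; simp)
      (fun _ _ _ => by ext; simp) (fun _ _ _ => by ext; simp) (fun _ _ _ => by ext; simp)
  have hB' : Submodule.map₂ B' (polynomialCurves R M) (polynomialCurves R N) ≤
      polynomialCurves R P := by
    simp only [polynomialCurves, Submodule.map₂_span_span, Submodule.span_le]
    rintro _ ⟨_, ⟨⟨k, c⟩, rfl⟩, _, ⟨⟨l, d⟩, rfl⟩, rfl⟩
    refine Submodule.subset_span ⟨(k + l, B c d), funext fun s => ?_⟩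
    simp [B', pow_add, smul_smul, mul_comm]
  exact hB' (Submodule.apply_mem_map₂ B' hγ hδ)

theorem exists_eval_eq_of_mem_polynomialCurves (f : M →ₗ[R] R) {γ : R → M}
    (hγ : γ ∈ polynomialCurves R M) : ∃ p : R[X], ∀ s, f (γ s) = p.eval s := by
  induction hγ using Submodule.span_induction with
  | mem _ h =>
    obtain ⟨⟨k, c⟩, rfl⟩ := h
    refine ⟨C (f c) * X ^ k, fun s => ?_⟩
    simp only [map_smul, smul_eq_mul, eval_mul, eval_C, eval_pow, eval_X, mul_comm]
  | zero => exact ⟨0, by simp⟩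
  | add _ _ _ _ h₁ h₂ =>
    obtain ⟨p, hp⟩ := h₁
    obtain ⟨q, hq⟩ := h₂
    exact ⟨p + q, by simp [hp, hq]⟩
  | smul r _ _ h =>
    obtain ⟨p, hp⟩ := h
    exact ⟨C r * p, by simp [hp]⟩

theorem Module.Basis.exists_det_eq_eval {ι : Type*} [Fintype ι] [DecidableEq ι]
    (e : Basis ι R M) {γ : ι → R → M} (hγ : ∀ i, γ i ∈ polynomialCurves R M) :
    ∃ q : R[X], ∀ s, e.det (fun i => γ i s) = q.eval s := by
  choose P hP using fun j i => exists_eval_eq_of_mem_polynomialCurves (e.coord j) (hγ i)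
  refine ⟨(Matrix.of P).det, fun s => ?_⟩
  rw [e.det_apply, ← coe_evalRingHom, RingHom.map_det]
  congr 1
  ext j i
  simp [Basis.toMatrix_apply, ← hP]

end PolynomialCurves

section VectorSpace

variable {𝔽 M : Type*} [Field 𝔽] [AddCommGroup M] [Module 𝔽 M]

theorem finite_setOf_span_ne_top_of_eq_basis {ι : Type*} [Fintype ι] [DecidableEq ι]
    (e : Module.Basis ι 𝔽 M) {γ : ι → 𝔽 → M} (hγ : ∀ i, γ i ∈ polynomialCurves 𝔽 M) {s₀ : 𝔽}
    (h₀ : (fun i => γ i s₀) = e) :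
    {s | Submodule.span 𝔽 (Set.range fun i => γ i s) ≠ ⊤}.Finite := by
  obtain ⟨q, hq⟩ := e.exists_det_eq_eval hγ
  have hq₀ : q ≠ 0 := by
    rintro rfl
    simpa [h₀, e.det_self] using hq s₀
  refine (finite_setOfPred_isRoot hq₀).subset fun s hs => ?_
  by_contra hroot
  exact hs (e.is_basis_iff_det.2 (by rw [hq]; exact isUnit_iff_ne_zero.2 hroot)).2

theorem polynomialCurve_eq_zero_of_finite_setOf_ne_zero [Infinite 𝔽] {γ : 𝔽 → M}
    (hγ : γ ∈ polynomialCurves 𝔽 M) (hfin : {s | γ s ≠ 0}.Finite) : γ = 0 := by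
  funext s
  refine (Module.forall_dual_apply_eq_zero_iff 𝔽 (γ s)).1 fun φ => ?_
  obtain ⟨p, hp⟩ := exists_eval_eq_of_mem_polynomialCurves φ hγ
  have hroots : {s | γ s ≠ 0}ᶜ ⊆ {s | p.IsRoot s} := fun t ht => by
    simp_all [IsRoot, ← hp]
  rw [hp, p.eq_zero_of_infinite_isRoot (hfin.infinite_compl.mono hroots), eval_zero]

end VectorSpace

section Generation

variable {R 𝔤 : Type*} [CommRing R] [LieRing 𝔤] [LieAlgebra R 𝔤]

theorem exists_polynomialCurve_of_mem_lieSpan {x y a b z : 𝔤}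
    (hz : z ∈ LieSubalgebra.lieSpan R 𝔤 {x + a, y + b}) :
    ∃ γ ∈ polynomialCurves R 𝔤, γ 1 = z ∧
      ∀ s, γ s ∈ LieSubalgebra.lieSpan R 𝔤 {x + s • a, y + s • b} := by
  induction hz using LieSubalgebra.lieSpan_induction with
  | mem z hz =>
    rcases hz with rfl | rfl
    · exact ⟨fun s => x + s • a, add_smul_mem_polynomialCurves x a, by simp,
        fun s => LieSubalgebra.subset_lieSpan (by simp)⟩
    · exact ⟨fun s => y + s • b, add_smul_mem_polynomialCurves y b, by simp,
        fun s => LieSubalgebra.subset_lieSpan (by simp)⟩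
  | zero => exact ⟨0, zero_mem _, rfl, fun _ => zero_mem _⟩
  | add _ _ _ _ h₁ h₂ =>
    obtain ⟨γ, hγ, rfl, hγs⟩ := h₁
    obtain ⟨δ, hδ, rfl, hδs⟩ := h₂
    exact ⟨γ + δ, add_mem hγ hδ, rfl, fun s => add_mem (hγs s) (hδs s)⟩
  | smul r _ _ h =>
    obtain ⟨γ, hγ, rfl, hγs⟩ := h
    exact ⟨r • γ, Submodule.smul_mem _ r hγ, rfl, fun s => LieSubalgebra.smul_mem _ r (hγs s)⟩
  | lie _ _ _ _ h₁ h₂ =>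
    obtain ⟨γ, hγ, rfl, hγs⟩ := h₁
    obtain ⟨δ, hδ, rfl, hδs⟩ := h₂
    exact ⟨fun s => ⁅γ s, δ s⁆,
      apply₂_mem_polynomialCurves (LieModule.toEnd R 𝔤 𝔤 : 𝔤 →ₗ[R] Module.End R 𝔤) hγ hδ, rfl,
      fun s => LieSubalgebra.lie_mem _ (hγs s) (hδs s)⟩

theorem finite_setOf_lieSpan_ne_top {𝔽 : Type*} [Field 𝔽] [LieAlgebra 𝔽 𝔤] [Module.Finite 𝔽 𝔤]
    {x y a b : 𝔤} (h : LieSubalgebra.lieSpan 𝔽 𝔤 {x + a, y + b} = ⊤) :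
    {s : 𝔽 | LieSubalgebra.lieSpan 𝔽 𝔤 {x + s • a, y + s • b} ≠ ⊤}.Finite := by
  let e := Module.finBasis 𝔽 𝔤
  choose γ hγ hγ₁ hγs using fun i =>
    exists_polynomialCurve_of_mem_lieSpan (h ▸ LieSubalgebra.mem_top (e i))
  refine (finite_setOf_span_ne_top_of_eq_basis e hγ (funext hγ₁)).subset fun s hs hspan => hs ?_
  rw [← LieSubalgebra.toSubmodule_eq_top, eq_top_iff, ← hspan, Submodule.span_le]
  exact Set.range_subset_iff.2 fun i => hγs i s

end Generation

section EquivarianceDefect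

variable {R 𝔤 V : Type*} [CommRing R] [LieRing 𝔤] [LieAlgebra R 𝔤] [AddCommGroup V] [Module R V]
  (ρ : 𝔤 →ₗ⁅R⁆ Module.End R V)

def LieHom.stabilizer (v : V) : LieSubalgebra R 𝔤 :=
  { LinearMap.ker ((ρ : 𝔤 →ₗ[R] Module.End R V).flip v) with
    lie_mem' := fun hx hy => by simp_all }

def IsLinearKernelVector (ψ : 𝔤 →ₗ[R] V) : Prop :=
  ∀ x, ρ x (ψ x) = 0

def equivarianceDefect (ψ : 𝔤 →ₗ[R] V) : 𝔤 →ₗ[R] 𝔤 →ₗ[R] V :=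
  (LieModule.toEnd R 𝔤 𝔤 : 𝔤 →ₗ[R] Module.End R 𝔤).compr₂ ψ -
    (ρ : 𝔤 →ₗ[R] Module.End R V).compl₂ ψ

@[simp]
theorem equivarianceDefect_apply (ψ : 𝔤 →ₗ[R] V) (x y : 𝔤) :
    equivarianceDefect ρ ψ x y = ψ ⁅x, y⁆ - ρ x (ψ y) :=
  rfl

namespace IsLinearKernelVector

variable {ρ} {ψ : 𝔤 →ₗ[R] V}

theorem apply_apply_eq_neg (hψ : IsLinearKernelVector ρ ψ) (x y : 𝔤) :
    ρ x (ψ y) = -ρ y (ψ x) := by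
  have h := hψ (x + y)
  simp only [map_add, LinearMap.add_apply, hψ x, hψ y, zero_add, add_zero] at h
  exact eq_neg_of_add_eq_zero_right h

theorem equivarianceDefect_swap (hψ : IsLinearKernelVector ρ ψ) (x y : 𝔤) :
    equivarianceDefect ρ ψ y x = -equivarianceDefect ρ ψ x y := by
  simp only [equivarianceDefect_apply, ← lie_skew x y, map_neg, hψ.apply_apply_eq_neg y x]
  abel

theorem apply_equivarianceDefect_left (hψ : IsLinearKernelVector ρ ψ) (x y : 𝔤) :
    ρ x (equivarianceDefect ρ ψ x y) = 0 := by
  rw [equivarianceDefect_apply, map_sub, hψ.apply_apply_eq_neg x ⁅x, y⁆,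
    hψ.apply_apply_eq_neg x y, LieHom.map_lie, Ring.lie_def]
  simp [hψ x]

theorem apply_equivarianceDefect_right (hψ : IsLinearKernelVector ρ ψ) (x y : 𝔤) :
    ρ y (equivarianceDefect ρ ψ x y) = 0 := by
  rw [← neg_neg (equivarianceDefect ρ ψ x y), ← hψ.equivarianceDefect_swap, map_neg,
    hψ.apply_equivarianceDefect_left, neg_zero]

theorem lieSpan_le_stabilizer_equivarianceDefect (hψ : IsLinearKernelVector ρ ψ) (x y : 𝔤) :
    LieSubalgebra.lieSpan R 𝔤 {x, y} ≤ ρ.stabilizer (equivarianceDefect ρ ψ x y) := by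
  rw [LieSubalgebra.lieSpan_le]
  rintro _ (rfl | rfl)
  exacts [hψ.apply_equivarianceDefect_left _ _, hψ.apply_equivarianceDefect_right _ _]

theorem equivarianceDefect_eq_zero_of_lieSpan_eq_top (hψ : IsLinearKernelVector ρ ψ)
    (htriv : ∀ v : V, (∀ x : 𝔤, ρ x v = 0) → v = 0) {x y : 𝔤}
    (h : LieSubalgebra.lieSpan R 𝔤 {x, y} = ⊤) : equivarianceDefect ρ ψ x y = 0 :=
  htriv _ fun z => hψ.lieSpan_le_stabilizer_equivarianceDefect x y (h ▸ LieSubalgebra.mem_top z)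

end IsLinearKernelVector

end EquivarianceDefect

/-- Let `𝔤` be a finite-dimensional Lie algebra over an infinite field generated by two
elements, and let `(ρ, V)` be a representation with no trivial subrepresentation. Then every
linear kernel vector `ψ` satisfies `ψ([x,y]) − ρ(x)ψ(y) = 0` for all `x, y`. -/
theorem linearKernelVector_equivariant_of_two_generated {𝔽 : Type*} [Field 𝔽] [Infinite 𝔽]
    {𝔤 V : Type*} [LieRing 𝔤] [LieAlgebra 𝔽 𝔤] [Module.Finite 𝔽 𝔤]
    [AddCommGroup V] [Module 𝔽 V]
    (hgen : ∃ x₀ y₀ : 𝔤, LieSubalgebra.lieSpan 𝔽 𝔤 {x₀, y₀} = ⊤)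
    (ρ : 𝔤 →ₗ⁅𝔽⁆ Module.End 𝔽 V)
    (htriv : ∀ v : V, (∀ x : 𝔤, ρ x v = 0) → v = 0)
    (ψ : 𝔤 →ₗ[𝔽] V) (hψ : ∀ x : 𝔤, ρ x (ψ x) = 0) :
    ∀ x y : 𝔤, ψ ⁅x, y⁆ - ρ x (ψ y) = 0 := by
  obtain ⟨x₀, y₀, hgen⟩ := hgen
  intro x y
  let C := equivarianceDefect ρ ψ
  have hcurve : (fun s : 𝔽 => C (x + s • (x₀ - x)) (y + s • (y₀ - y))) ∈ polynomialCurves 𝔽 V :=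
    apply₂_mem_polynomialCurves C (add_smul_mem_polynomialCurves _ _)
      (add_smul_mem_polynomialCurves _ _)
  have hcofinite : {s : 𝔽 | C (x + s • (x₀ - x)) (y + s • (y₀ - y)) ≠ 0}.Finite :=
    (finite_setOf_lieSpan_ne_top (by simpa using hgen)).subset fun _ hs hgen' =>
      hs (IsLinearKernelVector.equivarianceDefect_eq_zero_of_lieSpan_eq_top hψ htriv hgen')
  simpa [C] using congrFun (polynomialCurve_eq_zero_of_finite_setOf_ne_zero hcurve hcofinite) 0
end
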